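/- arXiv:2006.16513 — 7 statements merged into one kernel-verified Lean document; each statement's English description precedes it below -/
import Mathlib

section
/- Let m be a positive even integer and t a positive integer with t < m/2. Suppose A, B ⊆ Z_m satisfy A ∪ B = Z_m and A ∩ B = {r_1, ..., r_{2t}}. If R_A(n) = R_B(n) for all n ∈ Z_m, then for every n ∈ Z_m, the sum over i = 1,...,2t of the indicator χ_A(n - r_i) equals t + (1/2)·R_{{r_1,...,r_{2t}}}(n). -/
/-!
Write `X ⋆ Y` for the count `n ↦ #{(x, y) ∈ X × Y | x + y = n}` and `C = A ∩ B`. Since `A ∪ B` is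
the whole group, `B` is the disjoint union of `Aᶜ` and `C`. As `⋆` is additive in each argument,
`Aᶜ ⋆ C = #C - A ⋆ C` and `Aᶜ ⋆ Aᶜ = m - 2 #A + A ⋆ A`, so expanding `B ⋆ B` gives
`B ⋆ B = m - 2 #A + A ⋆ A + 2 (#C - C ⋆ A) + C ⋆ C`.
Summing `A ⋆ A = B ⋆ B` over all `n` gives `#A ^ 2 = #B ^ 2`, hence `2 #A = m + #C`, and the
identity becomes `2 (C ⋆ A)(n) = #C + (C ⋆ C)(n)`, where `(C ⋆ A)(n) = ∑ᵢ χ_A(n - rᵢ)`.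
-/

open Finset

/-- Representation function: number of ordered pairs (a, a') in A × A with a + a' = n. -/
def repFn {m : ℕ} (A : Finset (ZMod m)) (n : ZMod m) : ℕ :=
  ((A ×ˢ A).filter (fun p => p.1 + p.2 = n)).card

namespace Finset

variable {G : Type*} [AddCommGroup G] [DecidableEq G]

lemma addConvolution_comm (A B : Finset G) (x : G) :
    A.addConvolution B x = B.addConvolution A x :=
  card_equiv (Equiv.prodComm G G) (by simp [add_comm, and_comm])

lemma addConvolution_eq_card_filter (A B : Finset G) (x : G) :
    A.addConvolution B x = #{a ∈ A | x - a ∈ B} :=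
  card_nbij' Prod.fst (fun a => (a, x - a))
    (by
      rintro ⟨a, b⟩ h
      simp only [coe_filter, mem_product, Set.mem_ofPred_eq] at h ⊢
      obtain ⟨⟨ha, hb⟩, rfl⟩ := h
      simpa using And.intro ha hb)
    (by intro a; simp +contextual)
    (by
      rintro ⟨a, b⟩ h
      simp only [coe_filter, mem_product, Set.mem_ofPred_eq] at h
      obtain ⟨-, rfl⟩ := h
      simp)
    (by intro a; simp)

lemma union_addConvolution {A A' : Finset G} (h : Disjoint A A') (B : Finset G) (x : G) :
    (A ∪ A').addConvolution B x = A.addConvolution B x + A'.addConvolution B x := by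
  simp only [addConvolution, union_product, filter_union]
  exact card_union_of_disjoint (disjoint_filter_filter (disjoint_product.2 (Or.inl h)))

lemma addConvolution_union (A : Finset G) {B B' : Finset G} (h : Disjoint B B') (x : G) :
    A.addConvolution (B ∪ B') x = A.addConvolution B x + A.addConvolution B' x := by
  simp only [addConvolution_comm A, union_addConvolution h]

variable [Fintype G]

lemma sum_addConvolution (A B : Finset G) : ∑ x, A.addConvolution B x = #A * #B := by
  rw [← card_product]
  exact (card_eq_sum_card_fiberwise fun p _ => mem_univ (p.1 + p.2)).symm

lemma card_eq_of_addConvolution_self_eq {A B : Finset G}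
    (h : A.addConvolution A = B.addConvolution B) : #A = #B := by
  have hsq : #A ^ 2 = #B ^ 2 := by rw [sq, sq, ← sum_addConvolution, ← sum_addConvolution, h]
  exact Nat.pow_left_injective two_ne_zero hsq

lemma compl_addConvolution_add_addConvolution (A B : Finset G) (x : G) :
    Aᶜ.addConvolution B x + A.addConvolution B x = #B := by
  rw [← univ_addConvolution B x, ← union_compl A, union_addConvolution disjoint_compl_right,
    add_comm]

lemma compl_addConvolution_compl_add_two_mul_card (A : Finset G) (x : G) :
    Aᶜ.addConvolution Aᶜ x + 2 * #A = Fintype.card G + A.addConvolution A x := by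
  have hAc := compl_addConvolution_add_addConvolution A Aᶜ x
  have hA := compl_addConvolution_add_addConvolution A A x
  have hcomm := addConvolution_comm A Aᶜ x
  have hcard := card_compl_add_card A
  omega

theorem two_mul_inter_addConvolution_eq {A B : Finset G} (hU : A ∪ B = univ)
    (hR : A.addConvolution A = B.addConvolution B) (x : G) :
    2 * (A ∩ B).addConvolution A x = #(A ∩ B) + (A ∩ B).addConvolution (A ∩ B) x := by
  set C := A ∩ B
  have hB : B = Aᶜ ∪ C := by
    ext y
    have hy : y ∈ A ∪ B := hU ▸ mem_univ y
    simp only [C, mem_union, mem_compl, mem_inter] at hy ⊢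
    tauto
  have hdisj : Disjoint Aᶜ C := disjoint_compl_left.mono_right inter_subset_left
  have hcard : 2 * #A = Fintype.card G + #C := by
    rw [two_mul, ← card_univ, ← hU, card_union_add_card_inter, card_eq_of_addConvolution_self_eq hR]
  have hBB : B.addConvolution B x = Aᶜ.addConvolution Aᶜ x + Aᶜ.addConvolution C x +
      (C.addConvolution Aᶜ x + C.addConvolution C x) := by
    rw [hB, union_addConvolution hdisj, addConvolution_union _ hdisj, addConvolution_union _ hdisj]
  have hAA := compl_addConvolution_compl_add_two_mul_card A x
  have hAcC := compl_addConvolution_add_addConvolution A C x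
  have hcomm₁ := addConvolution_comm C Aᶜ x
  have hcomm₂ := addConvolution_comm C A x
  have hR' := congrFun hR x
  omega

end Finset

lemma repFn_eq_addConvolution {m : ℕ} (A : Finset (ZMod m)) : repFn A = A.addConvolution A := rfl

theorem stmt1_general (m t : ℕ) [NeZero m]
    (A B : Finset (ZMod m)) (r : Fin (2 * t) → ZMod m) (hr : Function.Injective r)
    (hU : A ∪ B = Finset.univ) (hI : A ∩ B = Finset.univ.image r)
    (hR : ∀ n : ZMod m, repFn A n = repFn B n) :
    ∀ n : ZMod m,
      2 * (∑ i : Fin (2 * t), if n - r i ∈ A then 1 else 0) =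
        2 * t + repFn (A ∩ B) n := by
  intro n
  have hR' : A.addConvolution A = B.addConvolution B := by
    simpa only [repFn_eq_addConvolution] using funext hR
  have hcard : #(A ∩ B) = 2 * t := by
    rw [hI, card_image_of_injective _ hr, card_univ, Fintype.card_fin]
  have hsum : (A ∩ B).addConvolution A n = ∑ i : Fin (2 * t), if n - r i ∈ A then 1 else 0 := by
    rw [addConvolution_eq_card_filter, card_filter, hI, sum_image hr.injOn]
  rw [repFn_eq_addConvolution, ← hsum, ← hcard]
  exact two_mul_inter_addConvolution_eq hU hR' n

theorem stmt1 (m t : ℕ) [NeZero m] (hm : Even m) (ht : 0 < t) (htm : t < m / 2)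
    (A B : Finset (ZMod m)) (r : Fin (2 * t) → ZMod m) (hr : Function.Injective r)
    (hU : A ∪ B = Finset.univ) (hI : A ∩ B = Finset.univ.image r)
    (hR : ∀ n : ZMod m, repFn A n = repFn B n) :
    ∀ n : ZMod m,
      2 * (∑ i : Fin (2 * t), if n - r i ∈ A then 1 else 0) =
        2 * t + repFn (A ∩ B) n :=
  stmt1_general m t A B r hr hU hI hR
end

section
/- Let m be a positive even integer and let A, B ⊆ Z_m with A ∪ B = Z_m and |A ∩ B| = 2. Then R_A(n) = R_B(n) for all n ∈ Z_m if and only if B = A + m/2 (the translate of A by the residue class of m/2). -/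
/-!
Write `f = 𝟙_A - 𝟙_B`. The cross terms of `R_A - R_B` cancel, and `𝟙_A + 𝟙_B = 1 + 𝟙_{A ∩ B}`
because `A ∪ B` is everything, so with `A ∩ B = {c₁, c₂}`
`R_A(n) - R_B(n) = ∑ f + f(n - c₁) + f(n - c₂)`.
If this vanishes for every `n`, summing over `n` gives `(m + 2) ∑ f = 0`, hence `∑ f = 0`, and
`d = c₂ - c₁` is an antiperiod of `f`. Antiperiodicity exchanges `A \ B` and `B \ A` and preserves
`A ∩ B`; so `c₂ + d = c₁`, i.e. `2d = 0 ≠ d`, which forces `d = m/2`, and `B = A + d`.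
Conversely, translating `A` by an element of order two does not change `R_A`.
-/

open Finset

local notation "𝟙[" A "]" => Set.indicator (A : Set _) (fun _ => (1 : ℤ))

lemma indicator_add_indicator_of_union_eq_univ {α : Type*} [DecidableEq α] [Fintype α]
    {A B : Finset α} (hU : A ∪ B = univ) (x : α) : 𝟙[A] x + 𝟙[B] x = 1 + 𝟙[A ∩ B] x := by
  rw [← Set.indicator_union_add_inter_apply, ← coe_union, ← coe_inter, hU, coe_univ,
    Set.indicator_univ]

lemma mem_iff_mem_of_indicator_sub_eq_neg {α : Type*} [DecidableEq α] {A B : Finset α}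
    {x y : α} (hx : x ∈ A ∪ B) (hy : y ∈ A ∪ B) (h : 𝟙[A] y - 𝟙[B] y = -(𝟙[A] x - 𝟙[B] x)) :
    (y ∈ A ↔ x ∈ B) ∧ (y ∈ B ↔ x ∈ A) := by
  rw [mem_union] at hx hy
  simp only [Set.indicator_apply, mem_coe] at h
  by_cases hxA : x ∈ A <;> by_cases hxB : x ∈ B <;> by_cases hyA : y ∈ A <;>
    by_cases hyB : y ∈ B <;> simp_all

section FiniteAddCommGroup

variable {G : Type*} [AddCommGroup G] [Fintype G]

lemma sum_mul_comp_sub_comm {R : Type*} [CommSemiring R] (f g : G → R) (n : G) :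
    ∑ x, f x * g (n - x) = ∑ x, g x * f (n - x) :=
  Fintype.sum_equiv (Equiv.subLeft n) _ _ fun x => by simp [mul_comm]

lemma sum_eq_zero_of_forall_sum_add_sum_comp_sub_eq_zero {f : G → ℤ} {C : Finset G}
    (h : ∀ n, ∑ x, f x + ∑ c ∈ C, f (n - c) = 0) : ∑ x, f x = 0 := by
  have hsum : ∑ n, (∑ x, f x + ∑ c ∈ C, f (n - c)) = (Fintype.card G + #C) * ∑ x, f x := by
    have hshift (c : G) : ∑ x, f (x - c) = ∑ x, f x :=
      Fintype.sum_equiv (Equiv.subRight c) _ _ fun _ => rfl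
    simp only [sum_add_distrib, sum_const, card_univ, nsmul_eq_mul]
    rw [sum_comm]
    simp only [hshift, sum_const, nsmul_eq_mul]
    ring
  have hpos : (0 : ℤ) < Fintype.card G + #C := by positivity
  simpa [h, hpos.ne'] using hsum.symm

end FiniteAddCommGroup

section ZMod

variable {m : ℕ} [NeZero m]

lemma repFn_eq_sum_indicator (A : Finset (ZMod m)) (n : ZMod m) :
    (repFn A n : ℤ) = ∑ x, 𝟙[A] x * 𝟙[A] (n - x) := by
  have hinner (x : ZMod m) : ∑ y ∈ A, (if x + y = n then 1 else 0 : ℤ) = 𝟙[A] (n - x) := by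
    simp only [← eq_sub_iff_add_eq', sum_ite_eq', Set.indicator_apply, mem_coe]
  simp only [repFn, card_filter, Nat.cast_sum, Nat.cast_ite, Nat.cast_one, Nat.cast_zero,
    sum_product, hinner]
  simp only [Set.indicator_apply, mem_coe, ite_mul, one_mul, zero_mul, sum_ite_mem, univ_inter]

lemma repFn_image_add_right (A : Finset (ZMod m)) (h n : ZMod m) :
    repFn (A.image (· + h)) (n + h + h) = repFn A n := by
  have hind : ∀ x, 𝟙[A.image (· + h)] x = 𝟙[A] (x - h) := fun x => by
    simp only [Set.indicator_apply, mem_coe, mem_image, ← eq_sub_iff_add_eq, exists_eq_right]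
  rw [← Nat.cast_inj (R := ℤ), repFn_eq_sum_indicator, repFn_eq_sum_indicator]
  refine Fintype.sum_equiv (Equiv.subRight h) _ _ fun x => ?_
  simp only [hind, Equiv.subRight_apply]
  congr 2; abel

lemma repFn_sub_repFn_of_union_eq_univ {A B : Finset (ZMod m)} (hU : A ∪ B = univ)
    (n : ZMod m) :
    (repFn A n : ℤ) - repFn B n
      = ∑ x : ZMod m, (𝟙[A] x - 𝟙[B] x) + ∑ c ∈ A ∩ B, (𝟙[A] (n - c) - 𝟙[B] (n - c)) := by
  set f : ZMod m → ℤ := fun x => 𝟙[A] x - 𝟙[B] x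
  calc (repFn A n : ℤ) - repFn B n = ∑ x, f x * (𝟙[A] (n - x) + 𝟙[B] (n - x)) := by
        have hcross := sum_mul_comp_sub_comm 𝟙[A] 𝟙[B] n
        simp only [f, repFn_eq_sum_indicator, sub_mul, mul_add, sum_sub_distrib, sum_add_distrib]
        linarith
    _ = ∑ x, f x + ∑ x, 𝟙[A ∩ B] x * f (n - x) := by
        simp only [indicator_add_indicator_of_union_eq_univ hU, mul_add, mul_one,
          sum_add_distrib, sum_mul_comp_sub_comm f]
    _ = ∑ x, f x + ∑ c ∈ A ∩ B, f (n - c) := by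
        simp only [← coe_inter, Set.indicator_apply, mem_coe, ite_mul, one_mul, zero_mul,
          sum_ite_mem, univ_inter]

lemma ZMod.eq_natCast_half_of_add_self_eq_zero {d : ZMod m} (hd : d ≠ 0) (h : d + d = 0) :
    d = ((m / 2 : ℕ) : ZMod m) := by
  have hpos : 0 < d.val := ZMod.val_pos.2 hd
  have hlt : d.val < m := d.val_lt
  obtain ⟨k, hk⟩ : m ∣ d.val + d.val := by
    rw [← ZMod.natCast_eq_zero_iff, Nat.cast_add, ZMod.natCast_zmod_val, h]
  obtain rfl : k = 1 := by
    rcases k with _ | _ | k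
    · omega
    · rfl
    · nlinarith
  rw [← ZMod.natCast_zmod_val d]
  congr 1
  omega

lemma exists_eq_image_add_of_repFn_eq {A B : Finset (ZMod m)}
    (hU : A ∪ B = univ) (hI : #(A ∩ B) = 2) (hR : ∀ n, repFn A n = repFn B n) :
    ∃ d : ZMod m, d ≠ 0 ∧ d + d = 0 ∧ B = A.image (· + d) := by
  obtain ⟨c₁, c₂, hne, hC⟩ := card_eq_two.mp hI
  set f : ZMod m → ℤ := fun x => 𝟙[A] x - 𝟙[B] x
  have hrel (n : ZMod m) : ∑ x, f x + ∑ c ∈ A ∩ B, f (n - c) = 0 := by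
    rw [← repFn_sub_repFn_of_union_eq_univ hU, hR, sub_self]
  have hsum : ∑ x, f x = 0 := sum_eq_zero_of_forall_sum_add_sum_comp_sub_eq_zero hrel
  have hanti : Function.Antiperiodic f (c₂ - c₁) := fun x => by
    have h := hrel (x + c₂)
    rw [hsum, zero_add, hC, sum_pair hne, add_sub_cancel_right, add_sub_assoc] at h
    linear_combination h
  have hmem (x : ZMod m) : (x + (c₂ - c₁) ∈ A ↔ x ∈ B) ∧ (x + (c₂ - c₁) ∈ B ↔ x ∈ A) :=
    mem_iff_mem_of_indicator_sub_eq_neg (hU ▸ mem_univ x) (hU ▸ mem_univ _) (hanti x)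
  have hc₂ : c₂ + (c₂ - c₁) = c₁ := by
    have hc₂C : c₂ ∈ A ∩ B := by simp [hC]
    have h : c₂ + (c₂ - c₁) ∈ A ∩ B := by
      rw [mem_inter] at hc₂C ⊢
      exact ⟨(hmem c₂).1.2 hc₂C.2, (hmem c₂).2.2 hc₂C.1⟩
    rw [hC, mem_insert, mem_singleton] at h
    exact h.resolve_right fun h' => hne (by linear_combination -h')
  have hdd : (c₂ - c₁) + (c₂ - c₁) = 0 := by linear_combination hc₂
  refine ⟨c₂ - c₁, sub_ne_zero.2 hne.symm, hdd, ?_⟩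
  ext x
  rw [image_add_right, mem_preimage, neg_eq_of_add_eq_zero_left hdd, (hmem x).1]

end ZMod

lemma ZMod.natCast_half_add_self {m : ℕ} (hm : Even m) :
    ((m / 2 : ℕ) : ZMod m) + ((m / 2 : ℕ) : ZMod m) = 0 := by
  rw [← two_mul, ← Nat.cast_ofNat, ← Nat.cast_mul, Nat.two_mul_div_two_of_even hm,
    ZMod.natCast_self]

theorem stmt2 (m : ℕ) [NeZero m] (hm : Even m)
    (A B : Finset (ZMod m)) (hU : A ∪ B = Finset.univ) (hI : (A ∩ B).card = 2) :
    (∀ n : ZMod m, repFn A n = repFn B n) ↔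
      B = A.image (fun x => x + ((m / 2 : ℕ) : ZMod m)) := by
  constructor
  · intro hR
    obtain ⟨d, hd, hdd, rfl⟩ := exists_eq_image_add_of_repFn_eq hU hI hR
    rw [ZMod.eq_natCast_half_of_add_self_eq_zero hd hdd]
  · rintro rfl n
    have h := repFn_image_add_right A ((m / 2 : ℕ) : ZMod m) n
    rwa [add_assoc, ZMod.natCast_half_add_self hm, add_zero, eq_comm] at h
end

section
/- Let m = 4k with k ≥ 2 an integer. Define A = {0,...,k-1} ∪ {k+1,...,3k-1} ∪ {3k+1,...,4k-1} and B = {1,...,2k-1} ∪ {2k+1,...,4k-1} as subsets of Z_m. Then A ∪ B = Z_m, |A ∩ B| = m - 4, B ≠ A + m/2, and R_A(n) = R_B(n) for all n ∈ Z_m. -/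
/-!
Write `c = k`, an element of order 4 in `ℤ/4k`. Then `A` is everything except `c, 3c` and `B` is
everything except `0, 2c`. Because `4c = 0`, both `A + c` and `A - c` equal `B`, so
`(a, a') ↦ (a + c, a' - c)` is a sum-preserving bijection from `A × A` onto `B × B`, whereas
`A + 2c` misses `c` and hence is not `B`.
-/

open Finset

section ZMod

variable {m : ℕ}

theorem repFn_eq_of_add_mem_iff_of_sub_mem_iff {A B : Finset (ZMod m)} (c : ZMod m)
    (hadd : ∀ x, x + c ∈ B ↔ x ∈ A) (hsub : ∀ x, x - c ∈ B ↔ x ∈ A) (n : ZMod m) :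
    repFn A n = repFn B n := by
  apply card_nbij' (fun p => (p.1 + c, p.2 - c)) (fun q => (q.1 - c, q.2 + c))
  · rintro ⟨a, a'⟩ h
    simp only [coe_filter, mem_product, Set.mem_ofPred_eq] at h ⊢
    exact ⟨⟨(hadd a).2 h.1.1, (hsub a').2 h.1.2⟩, by rw [← h.2]; ring⟩
  · rintro ⟨b, b'⟩ h
    simp only [coe_filter, mem_product, Set.mem_ofPred_eq] at h ⊢
    refine ⟨⟨?_, ?_⟩, by rw [← h.2]; ring⟩
    · rw [← hadd, sub_add_cancel]; exact h.1.1
    · rw [← hsub, add_sub_cancel_right]; exact h.1.2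
  · intro p _; simp
  · intro q _; simp

variable [NeZero m]

theorem natCast_eq_iff_val_eq {a : ℕ} (ha : a < m) {x : ZMod m} : x = a ↔ x.val = a :=
  ⟨fun h => h ▸ ZMod.val_natCast_of_lt ha, fun h => h ▸ (ZMod.natCast_zmod_val x).symm⟩

theorem mem_image_natCast_Icc {a b : ℕ} (hb : b < m) {x : ZMod m} :
    x ∈ (Icc a b).image (Nat.cast : ℕ → ZMod m) ↔ a ≤ x.val ∧ x.val ≤ b := by
  simp only [mem_image, mem_Icc]
  constructor
  · rintro ⟨n, hn, rfl⟩
    rwa [ZMod.val_natCast_of_lt (hn.2.trans_lt hb)]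
  · exact fun h => ⟨x.val, h, ZMod.natCast_zmod_val x⟩

end ZMod

section OrderFour

variable {m : ℕ} {c : ZMod m} {A B : Finset (ZMod m)}

theorem nodup_multiples_of_four_mul_eq_zero (h4 : 4 * c = 0) (h2 : 2 * c ≠ 0) :
    [0, c, 2 * c, 3 * c].Nodup := by
  have hc : c ≠ 0 := by rintro rfl; simp at h2
  have h3 : 3 * c ≠ 0 := fun h => hc (by linear_combination h4 - h)
  simp only [List.nodup_cons, List.mem_cons, List.not_mem_nil, or_false, not_or, List.nodup_nil]
  grind

theorem ne_image_add_two_mul_of_four_mul_eq_zero (h4 : 4 * c = 0) (h2 : 2 * c ≠ 0)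
    (hA : ∀ x, x ∈ A ↔ x ≠ c ∧ x ≠ 3 * c) (hB : ∀ x, x ∈ B ↔ x ≠ 0 ∧ x ≠ 2 * c) :
    B ≠ A.image (· + 2 * c) := by
  have hc : c ≠ 0 := by rintro rfl; simp at h2
  intro hBA
  have hcB : c ∈ B := (hB c).2 ⟨hc, fun h => hc (by linear_combination -h)⟩
  obtain ⟨a, haA, ha⟩ := mem_image.1 (hBA ▸ hcB)
  exact ((hA a).1 haA).2 (by linear_combination ha - h4)

theorem repFn_eq_of_four_mul_eq_zero (h4 : 4 * c = 0)
    (hA : ∀ x, x ∈ A ↔ x ≠ c ∧ x ≠ 3 * c) (hB : ∀ x, x ∈ B ↔ x ≠ 0 ∧ x ≠ 2 * c) (n : ZMod m) :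
    repFn A n = repFn B n := by
  refine repFn_eq_of_add_mem_iff_of_sub_mem_iff c (fun x => ?_) (fun x => ?_) n
  · have hzero : x + c = 0 ↔ x = 3 * c :=
      ⟨fun h => by linear_combination h - h4, fun h => by linear_combination h + h4⟩
    have htwo : x + c = 2 * c ↔ x = c :=
      ⟨fun h => by linear_combination h, fun h => by rw [h]; ring⟩
    rw [hA, hB, ne_eq, ne_eq, hzero, htwo]
    tauto
  · have hzero : x - c = 0 ↔ x = c := sub_eq_zero
    have htwo : x - c = 2 * c ↔ x = 3 * c :=
      ⟨fun h => by linear_combination h, fun h => by rw [h]; ring⟩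
    rw [hA, hB, ne_eq, ne_eq, hzero, htwo]

variable [NeZero m]

theorem union_eq_univ_of_four_mul_eq_zero (h4 : 4 * c = 0) (h2 : 2 * c ≠ 0)
    (hA : ∀ x, x ∈ A ↔ x ≠ c ∧ x ≠ 3 * c) (hB : ∀ x, x ∈ B ↔ x ≠ 0 ∧ x ≠ 2 * c) :
    A ∪ B = univ := by
  have hc : c ≠ 0 := by rintro rfl; simp at h2
  refine eq_univ_of_forall fun x => ?_
  rw [mem_union, hA, hB]
  by_cases hx : x = c ∨ x = 3 * c
  · right
    rcases hx with rfl | rfl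
    · exact ⟨hc, fun h => hc (by linear_combination -h)⟩
    · exact ⟨fun h => hc (by linear_combination h4 - h), fun h => hc (by linear_combination h)⟩
  · exact Or.inl (not_or.1 hx)

theorem card_inter_of_four_mul_eq_zero (h4 : 4 * c = 0) (h2 : 2 * c ≠ 0)
    (hA : ∀ x, x ∈ A ↔ x ≠ c ∧ x ≠ 3 * c) (hB : ∀ x, x ∈ B ↔ x ≠ 0 ∧ x ≠ 2 * c) :
    (A ∩ B).card = m - 4 := by
  have hAB : A ∩ B = univ \ [0, c, 2 * c, 3 * c].toFinset := by
    ext x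
    simp only [mem_inter, hA, hB, mem_sdiff, mem_univ, List.mem_toFinset, List.mem_cons,
      List.not_mem_nil, or_false, true_and]
    tauto
  rw [hAB, card_univ_sdiff, ZMod.card,
    List.toFinset_card_of_nodup (nodup_multiples_of_four_mul_eq_zero h4 h2)]
  rfl

end OrderFour

theorem four_mul_natCast_eq_zero (k : ℕ) : 4 * (k : ZMod (4 * k)) = 0 := by
  exact_mod_cast ZMod.natCast_self (4 * k)

theorem two_mul_natCast_ne_zero {k : ℕ} (hk : k ≠ 0) : 2 * (k : ZMod (4 * k)) ≠ 0 := by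
  intro h
  have h4k : 4 * k ∣ 2 * k := (ZMod.natCast_eq_zero_iff _ _).1 (by exact_mod_cast h)
  have := Nat.le_of_dvd (by omega) h4k
  omega

theorem stmt5 (m k : ℕ) (hk : 2 ≤ k) (hm : m = 4 * k) [NeZero m]
    (A B : Finset (ZMod m))
    (hA : A = (Finset.Icc 0 (k - 1)).image (Nat.cast : ℕ → ZMod m) ∪
        (Finset.Icc (k + 1) (3 * k - 1)).image (Nat.cast : ℕ → ZMod m) ∪
        (Finset.Icc (3 * k + 1) (4 * k - 1)).image (Nat.cast : ℕ → ZMod m))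
    (hB : B = (Finset.Icc 1 (2 * k - 1)).image (Nat.cast : ℕ → ZMod m) ∪
        (Finset.Icc (2 * k + 1) (4 * k - 1)).image (Nat.cast : ℕ → ZMod m)) :
    A ∪ B = Finset.univ ∧
    (A ∩ B).card = m - 4 ∧
    B ≠ A.image (fun x => x + ((m / 2 : ℕ) : ZMod m)) ∧
    (∀ n : ZMod m, repFn A n = repFn B n) := by
  subst hm
  have e2 : ((2 * k : ℕ) : ZMod (4 * k)) = 2 * k := by push_cast; rfl
  have e3 : ((3 * k : ℕ) : ZMod (4 * k)) = 3 * k := by push_cast; rfl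
  have hA' : ∀ x, x ∈ A ↔ x ≠ k ∧ x ≠ 3 * k := by
    intro x
    rw [hA, ← e3, ne_eq, ne_eq, natCast_eq_iff_val_eq (by omega), natCast_eq_iff_val_eq (by omega)]
    simp (disch := omega) only [mem_union, mem_image_natCast_Icc]
    have := x.val_lt
    omega
  have hB' : ∀ x, x ∈ B ↔ x ≠ 0 ∧ x ≠ 2 * k := by
    intro x
    rw [hB, ← e2, ← Nat.cast_zero, ne_eq, ne_eq, natCast_eq_iff_val_eq (by omega),
      natCast_eq_iff_val_eq (by omega)]
    simp (disch := omega) only [mem_union, mem_image_natCast_Icc]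
    have := x.val_lt
    omega
  have h4 := four_mul_natCast_eq_zero k
  have h2 := two_mul_natCast_ne_zero (by omega : k ≠ 0)
  rw [show 4 * k / 2 = 2 * k by omega, e2]
  exact ⟨union_eq_univ_of_four_mul_eq_zero h4 h2 hA' hB',
    card_inter_of_four_mul_eq_zero h4 h2 hA' hB',
    ne_image_add_two_mul_of_four_mul_eq_zero h4 h2 hA' hB',
    repFn_eq_of_four_mul_eq_zero h4 hA' hB'⟩
end

section
/- For every positive integer m divisible by 4, there exist two distinct sets A, B ⊆ Z_m with A ∪ B = Z_m, |A ∩ B| = 4, B ≠ A + m/2, and R_A(n) = R_B(n) for all n ∈ Z_m. (For m = 4, interpret the condition |A ∩ B| = 4 as the case |A ∩ B| = m - 4 = 0.) -/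
/-!
Write `m = 4k` and let `A = [0, k] ∪ [2k, 3k] ⊆ ℤ/4k`, `B = A + k`. Since `A + 2k = A`, the map
`(a, b) ↦ (a + k, b - k)` is a bijection between the representations of `n` in `A` and in `B`,
so `R_A = R_B`. The blocks of `A` and `B` interlock: together they cover `ℤ/4k` and they meet
exactly in `{0, k, 2k, 3k}`. Finally `B ≠ A = A + 2k` because `1 ∈ A \ B` once `k ≥ 2`;
the case `m = 4` is settled by `A = {0, 2}`, `B = {1, 3}`.
-/

open Finset

theorem repFn_image_add_of_image_add_add {m : ℕ} {A : Finset (ZMod m)} {c : ZMod m}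
    (hA : A.image (· + (c + c)) = A) (n : ZMod m) :
    repFn (A.image (· + c)) n = repFn A n := by
  have mem_A : ∀ x, x - (c + c) ∈ A ↔ x ∈ A := fun x => by
    conv_rhs => rw [← hA]
    simp [image_add_right, sub_eq_add_neg]
  have mem_B : ∀ x, x ∈ A.image (· + c) ↔ x - c ∈ A := fun x => by
    simp [image_add_right, sub_eq_add_neg]
  refine card_nbij' (fun p => (p.1 - c, p.2 + c)) (fun p => (p.1 + c, p.2 - c)) ?_ ?_ ?_ ?_
  · rintro ⟨x, y⟩ hxy
    simp only [coe_filter, mem_product, mem_B, Set.mem_ofPred_eq] at hxy ⊢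
    refine ⟨⟨hxy.1.1, ?_⟩, by rw [← hxy.2]; abel⟩
    rw [← mem_A]
    convert hxy.1.2 using 1
    abel
  · rintro ⟨a, b⟩ hab
    simp only [coe_filter, mem_product, mem_B, Set.mem_ofPred_eq] at hab ⊢
    refine ⟨⟨by simpa using hab.1.1, ?_⟩, by rw [← hab.2]; abel⟩
    convert (mem_A b).2 hab.1.2 using 1
    abel
  · rintro ⟨x, y⟩ -
    simp
  · rintro ⟨a, b⟩ -
    simp

namespace ZMod

theorem val_add_natCast_cases {n j : ℕ} [NeZero n] (x : ZMod n) (hj : j < n) :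
    (x.val + j < n ∧ (x + j).val = x.val + j) ∨
      (n ≤ x.val + j ∧ (x + j).val + n = x.val + j) := by
  have hj' : (j : ZMod n).val = j := val_cast_of_lt hj
  by_cases h : x.val + j < n
  · exact .inl ⟨h, by rw [val_add_of_lt (by rwa [hj']), hj']⟩
  · refine .inr ⟨by omega, ?_⟩
    rw [val_add_of_le (by rw [hj']; omega), hj']
    omega

theorem mem_image_add_natCast_iff {n a : ℕ} {A : Finset (ZMod n)} (ha : a ≤ n) {x : ZMod n} :
    x ∈ A.image (· + (a : ZMod n)) ↔ x + ((n - a : ℕ) : ZMod n) ∈ A := by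
  rw [image_add_right, mem_preimage, Nat.cast_sub ha, natCast_self, zero_sub]

theorem card_filter_val_mem {n : ℕ} [NeZero n] (T : Finset ℕ) (hT : ∀ t ∈ T, t < n) :
    #{x : ZMod n | x.val ∈ T} = #T :=
  card_nbij' val (↑) (fun x hx => by simpa using hx)
    (fun t ht => by simpa [val_cast_of_lt (hT t ht)] using ht)
    (fun x _ => natCast_zmod_val x) (fun t ht => val_cast_of_lt (hT t ht))

end ZMod

section TwoBlocks

variable {k : ℕ} [NeZero (4 * k)]

def twoBlocks (k : ℕ) [NeZero (4 * k)] : Finset (ZMod (4 * k)) :=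
  {x | x.val ≤ k ∨ 2 * k ≤ x.val ∧ x.val ≤ 3 * k}

theorem mem_twoBlocks {x : ZMod (4 * k)} :
    x ∈ twoBlocks k ↔ x.val ≤ k ∨ 2 * k ≤ x.val ∧ x.val ≤ 3 * k := by
  simp [twoBlocks]

theorem image_add_twoBlocks :
    (twoBlocks k).image (· + ((2 * k : ℕ) : ZMod (4 * k))) = twoBlocks k := by
  have hk : 0 < k := Nat.pos_of_mul_pos_left (NeZero.pos (4 * k))
  ext x
  rw [ZMod.mem_image_add_natCast_iff (by omega), show 4 * k - 2 * k = 2 * k by omega]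
  have := x.val_lt
  rcases x.val_add_natCast_cases (j := 2 * k) (by omega) with ⟨_, h⟩ | ⟨_, h⟩ <;>
    rw [mem_twoBlocks, mem_twoBlocks] <;> omega

theorem mem_image_add_twoBlocks {x : ZMod (4 * k)} :
    x ∈ (twoBlocks k).image (· + (k : ZMod (4 * k))) ↔
      k ≤ x.val ∧ x.val ≤ 2 * k ∨ 3 * k ≤ x.val ∨ x.val = 0 := by
  have hk : 0 < k := Nat.pos_of_mul_pos_left (NeZero.pos (4 * k))
  rw [ZMod.mem_image_add_natCast_iff (by omega), show 4 * k - k = 3 * k by omega]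
  have := x.val_lt
  rcases x.val_add_natCast_cases (j := 3 * k) (by omega) with ⟨_, h⟩ | ⟨_, h⟩ <;>
    rw [mem_twoBlocks] <;> omega

theorem twoBlocks_union_image_add :
    twoBlocks k ∪ (twoBlocks k).image (· + (k : ZMod (4 * k))) = univ := by
  ext x
  have := x.val_lt
  simp only [mem_union, mem_twoBlocks, mem_image_add_twoBlocks, mem_univ, iff_true]
  omega

theorem card_twoBlocks_inter_image_add :
    #(twoBlocks k ∩ (twoBlocks k).image (· + (k : ZMod (4 * k)))) = 4 := by
  have hk : 0 < k := Nat.pos_of_mul_pos_left (NeZero.pos (4 * k))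
  have hinter : twoBlocks k ∩ (twoBlocks k).image (· + (k : ZMod (4 * k))) =
      ({x | x.val ∈ ({0, k, 2 * k, 3 * k} : Finset ℕ)} : Finset (ZMod (4 * k))) := by
    ext x
    have := x.val_lt
    simp only [mem_inter, mem_twoBlocks, mem_image_add_twoBlocks, mem_filter_univ, mem_insert,
      mem_singleton]
    omega
  rw [hinter, ZMod.card_filter_val_mem _ (by simp; omega), card_insert_of_notMem (by simp; omega),
    card_insert_of_notMem (by simp; omega), card_pair (by omega)]

theorem one_mem_twoBlocks : (1 : ZMod (4 * k)) ∈ twoBlocks k := by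
  have hk : 0 < k := Nat.pos_of_mul_pos_left (NeZero.pos (4 * k))
  rw [mem_twoBlocks, ZMod.val_one'' (by omega)]
  omega

theorem one_notMem_image_add_twoBlocks (hk : 2 ≤ k) :
    (1 : ZMod (4 * k)) ∉ (twoBlocks k).image (· + (k : ZMod (4 * k))) := by
  rw [mem_image_add_twoBlocks, ZMod.val_one'' (by omega)]
  omega

end TwoBlocks

theorem stmt7 (m : ℕ) [NeZero m] (h4 : 4 ∣ m) :
    ∃ A B : Finset (ZMod m), A ≠ B ∧ A ∪ B = Finset.univ ∧
      (A ∩ B).card = (if m = 4 then 0 else 4) ∧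
      B ≠ A.image (fun x => x + ((m / 2 : ℕ) : ZMod m)) ∧
      (∀ n : ZMod m, repFn A n = repFn B n) := by
  by_cases hm : m = 4
  · subst hm
    exact ⟨{0, 2}, {1, 3}, by decide, eq_univ_iff_forall.mpr (by decide), by decide, by decide,
      by decide⟩
  obtain ⟨k, rfl⟩ := h4
  have hk : 2 ≤ k := by
    have := NeZero.ne (4 * k)
    omega
  have hAB : twoBlocks k ≠ (twoBlocks k).image (· + (k : ZMod (4 * k))) := fun h =>
    one_notMem_image_add_twoBlocks hk (h ▸ one_mem_twoBlocks)
  have hdouble : (k : ZMod (4 * k)) + k = ((2 * k : ℕ) : ZMod (4 * k)) := by push_cast; ring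
  refine ⟨twoBlocks k, (twoBlocks k).image (· + (k : ZMod (4 * k))), hAB,
    twoBlocks_union_image_add, by rw [if_neg hm, card_twoBlocks_inter_image_add], ?_, fun n => ?_⟩
  · rwa [show 4 * k / 2 = 2 * k by omega, image_add_twoBlocks, ne_comm]
  · rw [repFn_image_add_of_image_add_add (by rw [hdouble, image_add_twoBlocks])]
end

section
/- Let m be a positive even integer and let A, B ⊆ Z_m with A ∪ B = Z_m and A ∩ B = {r_1, r_2} where r_1 ≠ r_2. If R_A(n) = R_B(n) for all n ∈ Z_m, then r_2 = r_1 + m/2. -/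
/-!
Write `1_A` for the indicator of `A`. Then `R_A - R_B = (1_A - 1_B) * (1_A + 1_B)` as
convolutions, and `1_A + 1_B = 1 + δ_{r₁} + δ_{r₂}`. So `f = 1_A - 1_B` satisfies
`Σ f + f (n - r₁) + f (n - r₂) = 0` for every `n`; summing over `n` gives `Σ f = 0`, hence
`f (x + r₂ - r₁) = -f x`. As `f` vanishes exactly on `{r₁, r₂}`, taking `x = r₂` puts `2 r₂ - r₁`
in `{r₁, r₂}`, so `r₂ - r₁` is a non-zero element of order two, i.e. `m / 2`.
-/

open Finset

theorem ZMod.eq_natCast_half_of_two_nsmul_eq_zero {m : ℕ} [NeZero m] (hm : Even m)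
    {d : ZMod m} (hd : d ≠ 0) (h2 : 2 • d = 0) : d = ((m / 2 : ℕ) : ZMod m) := by
  obtain ⟨k, rfl⟩ := hm
  rw [two_nsmul] at h2
  rw [← ZMod.natCast_zmod_val d]
  congr 1
  have hlt := d.val_lt
  have hpos : d.val ≠ 0 := (ZMod.val_ne_zero d).2 hd
  obtain ⟨c, hc⟩ : k + k ∣ d.val + d.val := by
    rw [← ZMod.natCast_eq_zero_iff]
    push_cast [ZMod.natCast_zmod_val]
    exact h2
  have hc2 : c < 2 := by nlinarith
  interval_cases c <;> omega

section Indicator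

variable {G : Type*} [DecidableEq G]

def ind (A : Finset G) (x : G) : ℤ := if x ∈ A then 1 else 0

theorem ind_add_ind (A B : Finset G) (x : G) :
    ind A x + ind B x = ind (A ∪ B) x + ind (A ∩ B) x := by
  unfold ind
  by_cases hA : x ∈ A <;> by_cases hB : x ∈ B <;> simp [hA, hB]

theorem ind_pair {r₁ r₂ : G} (hr : r₁ ≠ r₂) (x : G) :
    ind {r₁, r₂} x = ind {r₁} x + ind {r₂} x := by
  unfold ind
  by_cases h₁ : x = r₁ <;> by_cases h₂ : x = r₂ <;> simp_all

theorem ind_eq_ind_iff {A B : Finset G} {x : G} (hx : x ∈ A ∪ B) :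
    ind A x = ind B x ↔ x ∈ A ∩ B := by
  unfold ind
  rw [mem_union] at hx
  by_cases hA : x ∈ A <;> by_cases hB : x ∈ B <;> simp_all

end Indicator

section Convolution

variable {G R : Type*} [AddCommGroup G] [Fintype G]

theorem sum_mul_apply_sub_comm [CommSemiring R] (f g : G → R) (n : G) :
    ∑ x, f x * g (n - x) = ∑ x, g x * f (n - x) :=
  Fintype.sum_equiv (Equiv.subLeft n) _ _ fun x => by simp [mul_comm]

theorem sum_sub_mul_add_apply_sub [CommRing R] (f g : G → R) (n : G) :
    ∑ x, (f x - g x) * (f (n - x) + g (n - x))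
      = ∑ x, f x * f (n - x) - ∑ x, g x * g (n - x) := by
  have hcross := sum_mul_apply_sub_comm f g n
  simp only [sub_mul, mul_add, sum_sub_distrib, sum_add_distrib]
  rw [hcross]
  ring

theorem sum_mul_ind_singleton_apply_sub [DecidableEq G] (f : G → ℤ) (n c : G) :
    ∑ x, f x * ind {c} (n - x) = f (n - c) := by
  have hx : ∀ x, n - x = c ↔ x = n - c := fun x => by constructor <;> rintro rfl <;> abel
  simp [ind, hx]

theorem sum_eq_zero_of_forall_sum_add_apply_sub_add_apply_sub [AddCommGroup R]
    [IsAddTorsionFree R] (f : G → R) (a b : G)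
    (hf : ∀ n, ∑ x, f x + f (n - a) + f (n - b) = 0) : ∑ x, f x = 0 := by
  have hshift : ∀ c, ∑ n, f (n - c) = ∑ x, f x := fun c =>
    Fintype.sum_equiv (Equiv.subRight c) _ _ fun _ => rfl
  have htotal : (Fintype.card G + 2) • ∑ x, f x = 0 := by
    have := Fintype.sum_congr _ _ hf
    rw [sum_add_distrib, sum_add_distrib, hshift, hshift, sum_const, card_univ,
      sum_const_zero] at this
    rwa [add_nsmul, two_nsmul, ← add_assoc]
  exact (nsmul_eq_zero_iff_right (by omega)).1 htotal

end Convolution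

theorem two_nsmul_sub_eq_zero_of_sum_ind_mul_eq {G : Type*} [AddCommGroup G] [Fintype G]
    [DecidableEq G] {A B : Finset G} {r₁ r₂ : G} (hr : r₁ ≠ r₂)
    (hU : A ∪ B = univ) (hI : A ∩ B = {r₁, r₂})
    (hR : ∀ n, ∑ x, ind A x * ind A (n - x) = ∑ x, ind B x * ind B (n - x)) :
    2 • (r₂ - r₁) = 0 := by
  set f : G → ℤ := fun x => ind A x - ind B x
  have hAB : ∀ x, ind A x + ind B x = 1 + ind {r₁} x + ind {r₂} x := fun x => by
    rw [ind_add_ind, hU, hI, ind_pair hr, add_assoc]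
    simp [ind]
  have hrel : ∀ n, ∑ x, f x + f (n - r₁) + f (n - r₂) = 0 := fun n => by
    rw [← sum_mul_ind_singleton_apply_sub f n r₁, ← sum_mul_ind_singleton_apply_sub f n r₂,
      ← sub_eq_zero.2 (hR n), ← sum_sub_mul_add_apply_sub]
    simp only [f, hAB, mul_add, mul_one, sum_add_distrib]
  have hsum := sum_eq_zero_of_forall_sum_add_apply_sub_add_apply_sub f r₁ r₂ hrel
  have hf₂ : f r₂ = 0 := by
    simp [f, sub_eq_zero, ind_eq_ind_iff (hU ▸ mem_univ r₂), hI]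
  have hf : f (r₂ + r₂ - r₁) = 0 := by
    have := hrel (r₂ + r₂)
    rw [hsum, show r₂ + r₂ - r₂ = r₂ by abel, hf₂] at this
    simpa using this
  have hmem : r₂ + r₂ - r₁ ∈ A ∩ B :=
    (ind_eq_ind_iff (hU ▸ mem_univ _)).1 (sub_eq_zero.1 hf)
  rw [hI, mem_insert, mem_singleton] at hmem
  rcases hmem with h | h
  · linear_combination (norm := abel) h
  · exact absurd (by linear_combination (norm := abel) -h) hr

theorem repFn_eq_sum_ind {m : ℕ} [NeZero m] (A : Finset (ZMod m)) (n : ZMod m) :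
    (repFn A n : ℤ) = ∑ x, ind A x * ind A (n - x) := by
  have hx : ∀ x y : ZMod m, x + y = n ↔ y = n - x := fun x y => eq_sub_iff_add_eq'.symm
  rw [repFn, card_filter, sum_product]
  push_cast
  simp only [hx, sum_ite_eq', ind, boole_mul, ← sum_filter, filter_mem_eq_inter, univ_inter]

theorem stmt13 (m : ℕ) [NeZero m] (hm : Even m)
    (A B : Finset (ZMod m)) (r₁ r₂ : ZMod m) (hr : r₁ ≠ r₂)
    (hU : A ∪ B = Finset.univ) (hI : A ∩ B = {r₁, r₂})
    (hR : ∀ n : ZMod m, repFn A n = repFn B n) :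
    r₂ = r₁ + ((m / 2 : ℕ) : ZMod m) := by
  have hR' : ∀ n, ∑ x, ind A x * ind A (n - x) = ∑ x, ind B x * ind B (n - x) := fun n => by
    rw [← repFn_eq_sum_ind, ← repFn_eq_sum_ind, hR n]
  have hhalf := ZMod.eq_natCast_half_of_two_nsmul_eq_zero hm (sub_ne_zero.2 hr.symm)
    (two_nsmul_sub_eq_zero_of_sum_ind_mul_eq hr hU hI hR')
  rw [← hhalf]
  abel
end

section
/- Let m ≥ 4 be a positive even integer. Let T ⊆ Z_m with |T| = m - 2, and let a, b ∉ T with a ≠ b. Set A = T ∪ {a} and B = T ∪ {b}. If R_A(n) = R_B(n) for all n ∈ Z_m, then b = a + m/2. -/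
open Finset

/-!
Since `|T| = m - 2`, the sets are complements of points: `A = {b}ᶜ` and `B = {a}ᶜ`.
For a complement of a point, `R_{{c}ᶜ}(n) = m - |{c, n - c}|`. At `n = 2b` this is `m - 1` for `A`,
so `|{a, 2b - a}| = 1`, i.e. `2a = 2b`. Then `c = b - a` is a nonzero element with `2c = 0`,
and the only such element of `ℤ/m` is `m/2`.
-/

lemma Finset.insert_eq_compl_singleton_of_card_eq {α : Type*} [Fintype α] [DecidableEq α]
    {T : Finset α} (hT : #T = Fintype.card α - 2) {a b : α} (ha : a ∉ T) (hb : b ∉ T)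
    (hab : a ≠ b) : insert a T = {b}ᶜ := by
  have hsub : insert a T ⊆ {b}ᶜ := by
    intro x hx
    rw [mem_compl, mem_singleton]
    rintro rfl
    exact (mem_insert.mp hx).elim (fun h => hab h.symm) hb
  have htwo : 2 ≤ Fintype.card α := by
    simpa [card_pair hab] using card_le_univ {a, b}
  refine eq_of_subset_of_card_le hsub ?_
  rw [card_compl, card_singleton, card_insert_of_notMem ha, hT]
  omega

lemma repFn_eq_card_filter {m : ℕ} (A : Finset (ZMod m)) (n : ZMod m) :
    repFn A n = #(A.filter (fun x => n - x ∈ A)) := by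
  refine card_nbij' Prod.fst (fun x => (x, n - x)) ?_ ?_ ?_ ?_
  · rintro ⟨x, y⟩ hxy
    simp only [coe_filter, mem_product, Set.mem_ofPred_eq] at hxy ⊢
    obtain ⟨⟨hx, hy⟩, rfl⟩ := hxy
    simpa using And.intro hx hy
  · intro x hx
    simp_all
  · rintro ⟨x, y⟩ hxy
    simp only [coe_filter, mem_product, Set.mem_ofPred_eq] at hxy
    obtain ⟨-, rfl⟩ := hxy
    simp
  · intro x _
    rfl

lemma repFn_compl_singleton_add_card_pair {m : ℕ} [NeZero m] (c n : ZMod m) :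
    repFn {c}ᶜ n + #{c, n - c} = m := by
  have hfilter : ({c}ᶜ : Finset (ZMod m)).filter (fun x => n - x ∈ ({c}ᶜ : Finset (ZMod m)))
      = {c, n - c}ᶜ := by
    ext x
    simp only [mem_filter, mem_compl, mem_singleton, mem_insert, not_or]
    constructor <;> rintro ⟨h₁, h₂⟩ <;> refine ⟨h₁, fun h => h₂ ?_⟩ <;> linear_combination -h
  rw [repFn_eq_card_filter, hfilter, card_compl, ZMod.card]
  exact Nat.sub_add_cancel ((card_le_univ _).trans (ZMod.card m).le)

lemma ZMod.eq_half_of_add_self_eq_zero {m : ℕ} [NeZero m] {c : ZMod m} (hc : c + c = 0)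
    (hc0 : c ≠ 0) : c = ((m / 2 : ℕ) : ZMod m) := by
  have hdvd : m ∣ 2 * c.val := by
    rw [← ZMod.natCast_eq_zero_iff]
    push_cast [ZMod.natCast_zmod_val]
    linear_combination hc
  obtain ⟨k, hk⟩ := hdvd
  have hlt : c.val < m := ZMod.val_lt c
  have hpos : 0 < c.val := Nat.pos_of_ne_zero ((ZMod.val_ne_zero c).mpr hc0)
  have hk1 : k = 1 := by
    rcases k with _ | _ | k
    · omega
    · rfl
    · nlinarith
  subst hk1
  rw [← ZMod.natCast_zmod_val c]
  congr 1
  omega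

theorem stmt14_general (m : ℕ) [NeZero m]
    (T : Finset (ZMod m)) (hT : T.card = m - 2)
    (a b : ZMod m) (ha : a ∉ T) (hb : b ∉ T) (hab : a ≠ b)
    (hR : ∀ n : ZMod m, repFn (insert a T) n = repFn (insert b T) n) :
    b = a + ((m / 2 : ℕ) : ZMod m) := by
  replace hT : #T = Fintype.card (ZMod m) - 2 := by rw [ZMod.card, hT]
  have hA := insert_eq_compl_singleton_of_card_eq hT ha hb hab
  have hB := insert_eq_compl_singleton_of_card_eq hT hb ha hab.symm
  have hcard : #{b, b + b - b} = #{a, b + b - a} := by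
    have := hR (b + b)
    rw [hA, hB] at this
    have hb' := repFn_compl_singleton_add_card_pair b (b + b)
    have ha' := repFn_compl_singleton_add_card_pair a (b + b)
    omega
  have haa : a = b + b - a := by
    by_contra hne
    rw [card_pair hne] at hcard
    simp at hcard
  have hhalf := ZMod.eq_half_of_add_self_eq_zero (c := b - a) (by linear_combination -haa)
    (sub_ne_zero.mpr hab.symm)
  rw [← hhalf]
  ring

theorem stmt14 (m : ℕ) [NeZero m] (hm : Even m) (hm4 : 4 ≤ m)
    (T : Finset (ZMod m)) (hT : T.card = m - 2)
    (a b : ZMod m) (ha : a ∉ T) (hb : b ∉ T) (hab : a ≠ b)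
    (hR : ∀ n : ZMod m, repFn (insert a T) n = repFn (insert b T) n) :
    b = a + ((m / 2 : ℕ) : ZMod m) :=
  stmt14_general m T hT a b ha hb hab hR
end

section
/- Let m be even with m ≡ 2 (mod 4), and let A, B ⊆ Z_m with A ∪ B = Z_m and A ∩ B = {r_1, r_2, r_3, r_4} of size 4. If R_A(n) = R_B(n) for all n ∈ Z_m, then (after reordering) r_3 = r_1 + m/2 and r_4 = r_2 + m/2. -/
/-!
Modulo 2, `repFn C n` only counts the diagonal solutions `a + a = n` with `a ∈ C`: the swap
`(a, a') ↦ (a', a)` pairs off all the others. Diagonal counts are additive by inclusion–exclusion,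
and over all of `ZMod m` they are even, since `a ↦ a + m/2` pairs off the solutions. Hence
`R_A = R_B` and `A ∪ B = ZMod m` force `R_{A ∩ B}(n)` to be even for every `n`. For `r ∈ A ∩ B`
and `n = 2r` this gives a second solution of `2x = 2r` in `A ∩ B`, which can only be `r + m/2`.
So `A ∩ B` is stable under translation by `m/2`, and a 4-element set with this property is the
union of two translate pairs.
-/

open Finset

lemma Finset.even_card_of_involution {ι : Type*} (s : Finset ι) (g : ι → ι)
    (hg_mem : ∀ a ∈ s, g a ∈ s) (hg_ne : ∀ a ∈ s, g a ≠ a) (hg_inv : ∀ a ∈ s, g (g a) = a) :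
    Even #s := by
  rw [← ZMod.natCast_eq_zero_iff_even, card_eq_sum_ones, Nat.cast_sum, Nat.cast_one]
  exact sum_involution (fun a _ => g a) (fun _ _ => by decide) (fun a ha _ => hg_ne a ha)
    hg_mem hg_inv

lemma repFn_cast_eq_card_filter_add_self {m : ℕ} (C : Finset (ZMod m)) (n : ZMod m) :
    (repFn C n : ZMod 2) = #{a ∈ C | a + a = n} := by
  set S := (C ×ˢ C).filter (fun p => p.1 + p.2 = n)
  have h_diag : #{p ∈ S | p.1 = p.2} = #{a ∈ C | a + a = n} :=
    card_nbij' Prod.fst (fun a => (a, a)) (fun _ => by grind) (fun _ => by grind)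
      (fun _ => by grind) (fun _ => by grind)
  have h_offdiag : Even #{p ∈ S | p.1 ≠ p.2} :=
    even_card_of_involution _ Prod.swap (by grind) (by grind) (by grind)
  rw [repFn, ← card_filter_add_card_filter_not (fun p : ZMod m × ZMod m => p.1 = p.2),
    Nat.cast_add, h_diag, h_offdiag.natCast_zmod_two, add_zero]

namespace ZMod

variable {m : ℕ}

lemma natCast_half_add_self_s15 (hm : Even m) : ((m / 2 : ℕ) : ZMod m) + (m / 2 : ℕ) = 0 := by
  rw [← Nat.cast_add, ← two_mul, Nat.two_mul_div_two_of_even hm, natCast_self]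

lemma natCast_half_ne_zero [NeZero m] (hm : Even m) : ((m / 2 : ℕ) : ZMod m) ≠ 0 := by
  rw [Ne, natCast_eq_zero_iff]
  have := NeZero.pos m
  rintro ⟨k, hk⟩
  rcases k with _ | k <;> grind

lemma eq_or_eq_add_half_of_add_self_eq [NeZero m] (hm : Even m) {x y : ZMod m}
    (h : x + x = y + y) : x = y ∨ x = y + (m / 2 : ℕ) := by
  obtain ⟨k, rfl⟩ := hm
  have hv : k + k ∣ 2 * (x - y).val := by
    rw [← natCast_eq_zero_iff, Nat.cast_mul, natCast_zmod_val]
    linear_combination h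
  have hlt := (x - y).val_lt
  obtain ⟨j, hj⟩ := hv
  have hval : (x - y).val = 0 ∨ (x - y).val = k := by
    rcases j with _ | _ | j <;> grind
  rw [← sub_eq_zero, ← sub_eq_iff_eq_add', ← natCast_zmod_val (x - y),
    show (k + k) / 2 = k by omega, natCast_eq_zero_iff]
  rcases hval with hv | hv <;> simp [hv]

lemma even_card_filter_add_self_eq [NeZero m] (hm : Even m) (n : ZMod m) :
    Even #{a : ZMod m | a + a = n} := by
  have hc := natCast_half_add_self_s15 hm
  refine even_card_of_involution _ (· + (m / 2 : ℕ)) (fun a ha => ?_) (fun a _ => ?_)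
    (fun a _ => by simp only [add_assoc, hc, add_zero])
  · rw [mem_filter] at ha ⊢
    exact ⟨mem_univ _, by linear_combination ha.2 + hc⟩
  · simpa using natCast_half_ne_zero hm

end ZMod

lemma even_repFn_inter {m : ℕ} [NeZero m] (hm : Even m) {A B : Finset (ZMod m)}
    (hU : A ∪ B = univ) (hR : ∀ n, repFn A n = repFn B n) (n : ZMod m) :
    Even (repFn (A ∩ B) n) := by
  have h := congrArg (Nat.cast : ℕ → ZMod 2)
    (card_union_add_card_inter {a ∈ A | a + a = n} {a ∈ B | a + a = n})
  rw [← filter_union, ← filter_inter_distrib, hU] at h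
  push_cast at h
  rw [(ZMod.even_card_filter_add_self_eq hm n).natCast_zmod_two, zero_add,
    ← repFn_cast_eq_card_filter_add_self A, ← repFn_cast_eq_card_filter_add_self B, hR] at h
  rw [← ZMod.natCast_eq_zero_iff_even, repFn_cast_eq_card_filter_add_self, h,
    CharTwo.add_self_eq_zero]

lemma add_half_mem_of_even_repFn {m : ℕ} [NeZero m] (hm : Even m) {I : Finset (ZMod m)}
    (hI : ∀ n, Even (repFn I n)) {r : ZMod m} (hr : r ∈ I) : r + (m / 2 : ℕ) ∈ I := by
  have h_even : Even #{a ∈ I | a + a = r + r} := by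
    rw [← ZMod.natCast_eq_zero_iff_even, ← repFn_cast_eq_card_filter_add_self]
    exact (hI _).natCast_zmod_two
  have h_mem : r ∈ {a ∈ I | a + a = r + r} := mem_filter.2 ⟨hr, rfl⟩
  have h_one_lt : 1 < #{a ∈ I | a + a = r + r} := by
    obtain ⟨k, hk⟩ := h_even
    have := card_pos.2 ⟨r, h_mem⟩
    omega
  obtain ⟨x, hx, hxr⟩ := exists_mem_ne h_one_lt r
  rw [mem_filter] at hx
  obtain rfl := (ZMod.eq_or_eq_add_half_of_add_self_eq hm hx.2).resolve_left hxr
  exact hx.1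

lemma Finset.exists_eq_insert_add_of_card_eq_four {G : Type*} [AddGroup G] [DecidableEq G]
    {c : G} (hc : c ≠ 0) (hcc : c + c = 0) {I : Finset G} (hI : ∀ r ∈ I, r + c ∈ I)
    (hcard : #I = 4) : ∃ s₁ s₂, I = {s₁, s₂, s₁ + c, s₂ + c} := by
  have h_ne : ∀ x, x + c ≠ x := fun x h => hc (by simpa using h)
  have h_swap : ∀ x y, x + c = y → x = y + c := fun x y h => by rw [← h, add_assoc, hcc, add_zero]
  obtain ⟨s₁, hs₁⟩ := card_pos.1 (by omega : 0 < #I)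
  obtain ⟨s₂, hs₂⟩ := card_pos.1 (by grind [card_erase_of_mem] :
    0 < #((I.erase s₁).erase (s₁ + c)))
  simp only [mem_erase] at hs₂
  refine ⟨s₁, s₂, (eq_of_subset_of_card_le ?_ ?_).symm⟩
  · grind
  · rw [hcard, card_eq_four.2 ⟨_, _, _, _, ?_, ?_, ?_, ?_, ?_, ?_, rfl⟩] <;> grind

theorem stmt15_general (m : ℕ) [NeZero m] (hm : m % 4 = 2)
    (A B : Finset (ZMod m))
    (hcard : (A ∩ B).card = 4)
    (hU : A ∪ B = Finset.univ)
    (hR : ∀ n : ZMod m, repFn A n = repFn B n) :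
    ∃ s₁ s₂ s₃ s₄ : ZMod m, ({s₁, s₂, s₃, s₄} : Finset (ZMod m)) = A ∩ B ∧
      s₃ = s₁ + ((m / 2 : ℕ) : ZMod m) ∧ s₄ = s₂ + ((m / 2 : ℕ) : ZMod m) := by
  have h_even : Even m := Nat.even_iff.2 (by omega)
  obtain ⟨s₁, s₂, h⟩ := exists_eq_insert_add_of_card_eq_four (ZMod.natCast_half_ne_zero h_even)
    (ZMod.natCast_half_add_self_s15 h_even)
    (fun _ => add_half_mem_of_even_repFn h_even (even_repFn_inter h_even hU hR)) hcard
  exact ⟨s₁, s₂, _, _, h.symm, rfl, rfl⟩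

theorem stmt15 (m : ℕ) [NeZero m] (hm : m % 4 = 2)
    (A B : Finset (ZMod m)) (r₁ r₂ r₃ r₄ : ZMod m)
    (hI : A ∩ B = {r₁, r₂, r₃, r₄}) (hcard : (A ∩ B).card = 4)
    (hU : A ∪ B = Finset.univ)
    (hR : ∀ n : ZMod m, repFn A n = repFn B n) :
    ∃ s₁ s₂ s₃ s₄ : ZMod m, ({s₁, s₂, s₃, s₄} : Finset (ZMod m)) = A ∩ B ∧
      s₃ = s₁ + ((m / 2 : ℕ) : ZMod m) ∧ s₄ = s₂ + ((m / 2 : ℕ) : ZMod m) :=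
  stmt15_general m hm A B hcard hU hR
end
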